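/- arXiv:1506.07977 — 2 statements merged into one kernel-verified Lean document; each statement's English description precedes it below -/
import Mathlib

section
/- Closed form of the non-backtracking walk generating function (equation (2.16)): for every d ≥ 1, every complex z with |z| < 1/(2d−1), and every k ∈ ℝ^d, the double series Σ_{x∈ℤ^d} Σ_{n≥0} b_n(x)·z^n·e^{i k·x} converges absolutely, the quantity 1 + (2d−1)z² − 2dz·D̂(k) is nonzero, and Σ_{x∈ℤ^d} Σ_{n≥0} b_n(x)·z^n·e^{i k·x} = (1 − z²)/(1 + (2d−1)z² − 2dz·D̂(k)). -/
open MeasureTheory Filter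
open scoped ENNReal

namespace NoBLE

/-- Vertices of the hypercubic lattice `ℤ^d`. -/
abbrev Vertex (d : ℕ) := Fin d → ℤ

/-- The Euclidean norm `‖x‖₂` of a lattice point. -/
noncomputable def norm2 {d : ℕ} (x : Vertex d) : ℝ :=
  Real.sqrt (∑ i, ((x i : ℝ)) ^ 2)

/-- The `ℓ¹`-norm `‖x‖₁` of a lattice point. -/
def norm1 {d : ℕ} (x : Vertex d) : ℤ := ∑ i, |x i|

/-- The standard unit vector `e_i`. -/
def basis {d : ℕ} (i : Fin d) : Vertex d := fun j => if j = i then 1 else 0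

/-- Directions `ι ∈ {±1, …, ±d}`: `(i, true)` stands for `+e_i`, `(i, false)` for `−e_i`. -/
abbrev Dir (d : ℕ) := Fin d × Bool

/-- The unit vector `e_ι` attached to the direction `ι`. -/
def dirVec {d : ℕ} (ι : Dir d) : Vertex d := if ι.2 then basis ι.1 else -basis ι.1

/-- The opposite direction `−ι`. -/
def dirNeg {d : ℕ} (ι : Dir d) : Dir d := (ι.1, !ι.2)

/-- Nearest-neighbour bonds of `ℤ^d`: the pair `(x, i)` encodes the undirected bond
`{x, x + e_i}`; every nearest-neighbour bond has a unique such representation. -/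
abbrev Bond (d : ℕ) := Vertex d × Fin d

/-- Bond configurations: each bond is either occupied (`true`) or vacant (`false`). -/
abbrev Config (d : ℕ) := Bond d → Bool

noncomputable instance (d : ℕ) : Encodable (Bond d) := Encodable.ofCountable _

/-- The undirected nearest-neighbour bond `{x, y}` is occupied in the configuration `ω`. -/
def Occ {d : ℕ} (ω : Config d) (x y : Vertex d) : Prop :=
  (∃ i, y = x + basis i ∧ ω (x, i) = true) ∨ (∃ i, x = y + basis i ∧ ω (y, i) = true)

/-- `x ↔ y`: `x` and `y` are joined by a path of occupied bonds (in particular `x ↔ x`). -/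
def Conn {d : ℕ} (ω : Config d) (x y : Vertex d) : Prop :=
  Relation.ReflTransGen (Occ ω) x y

/-- Splitting a uniform-`[0,1)` random variable into an i.i.d. sequence of Bernoulli(`p`)
bits: `bit p n u` is the `n`-th bit. -/
noncomputable def bit (p : ℝ) : ℕ → ℝ → Bool
  | 0 => fun u => if u < p then true else false
  | n + 1 => fun u => bit p n (if u < p then u / p else (u - p) / (1 - p))

/-- The Bernoulli(`p`) bond-percolation measure `ℙ_p` on `Config d`, i.e. the product over
all bonds of Bernoulli(`p`) measures on `{occupied, vacant}`; it is realised as the joint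
law of the i.i.d. Bernoulli(`p`) family `(bit p (encode b))_{b : Bond d}` driven by a
uniform random variable on `[0,1)`. -/
noncomputable def percMeasure (d : ℕ) (p : ℝ) : Measure (Config d) :=
  Measure.map (fun u => fun b : Bond d => bit p (Encodable.encode b) u)
    (volume.restrict (Set.Ico (0 : ℝ) 1))

/-- The two-point function `τ_p(x) = ℙ_p(0 ↔ x)`, as an extended real number. -/
noncomputable def tauE (d : ℕ) (p : ℝ) (x : Vertex d) : ℝ≥0∞ :=
  percMeasure d p {ω | Conn ω 0 x}

/-- The two-point function `τ_p(x) = ℙ_p(0 ↔ x)`, as a real number. -/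
noncomputable def tau (d : ℕ) (p : ℝ) (x : Vertex d) : ℝ := (tauE d p x).toReal

/-- The susceptibility `χ(p) = Σ_{x ∈ ℤ^d} τ_p(x) ∈ [0, ∞]`. -/
noncomputable def chi (d : ℕ) (p : ℝ) : ℝ≥0∞ := ∑' x : Vertex d, tauE d p x

/-- The critical point `p_c(d) = sup { p ∈ [0,1] : χ(p) < ∞ }`. -/
noncomputable def pc (d : ℕ) : ℝ := sSup {p : ℝ | p ∈ Set.Icc (0 : ℝ) 1 ∧ chi d p < ⊤}


/-- The Fourier transform `D̂(k) = d⁻¹ Σ_i cos kᵢ` of the simple random walk step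
distribution. -/
noncomputable def Dhat (d : ℕ) (k : Fin d → ℝ) : ℝ := (1 / (d : ℝ)) * ∑ i, Real.cos (k i)

/-- The inner product `k · x`. -/
def dot {d : ℕ} (k : Fin d → ℝ) (x : Vertex d) : ℝ := ∑ i, k i * (x i : ℝ)

/-- The Fourier transform `τ̂_p(k) = Σ_{x ∈ ℤ^d} τ_p(x) e^{i k · x}`, which is a real
number by the symmetry `τ_p(x) = τ_p(−x)`. -/
noncomputable def tauHat (d : ℕ) (p : ℝ) (k : Fin d → ℝ) : ℝ :=
  (∑' x : Vertex d, (tau d p x : ℂ) * Complex.exp (Complex.I * (dot k x : ℂ))).re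

/-- The non-backtracking condition for a sequence of steps: no step is immediately
followed by the reversed step. -/
def IsNB {d n : ℕ} (s : Fin n → Dir d) : Prop :=
  ∀ (i : ℕ) (h : i + 1 < n), s ⟨i + 1, h⟩ ≠ dirNeg (s ⟨i, Nat.lt_of_succ_lt h⟩)

/-- `b_n(x)`: the number of `n`-step non-backtracking nearest-neighbour walks from `0`
to `x`, encoded by their sequences of steps. -/
noncomputable def nbw (d n : ℕ) (x : Vertex d) : ℕ :=
  Nat.card {s : Fin n → Dir d // IsNB s ∧ (∑ i, dirVec (s i)) = x}

/-- `b^ι_n(x)`: as `nbw d n x`, with the additional requirement that the first position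
`ω₁` of the walk is not `e_ι`. -/
noncomputable def nbwA (d n : ℕ) (ι : Dir d) (x : Vertex d) : ℕ :=
  Nat.card {s : Fin n → Dir d //
    IsNB s ∧ (∀ h : 0 < n, s ⟨0, h⟩ ≠ ι) ∧ (∑ i, dirVec (s i)) = x}

/-!
The Fourier transform `W_n(k) = ∑_x b_n(x) e^{ik·x}` is a sum, over non-backtracking step
sequences, of products of step phases `e^{ik·e_ι}`, whose sum over all `2d` directions is
`c = 2d D̂(k)`. A walk of length `n + 1` extends by every step except the reversal of its last
one, and the phase of that reversed extension is the phase of the walk with its last step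
removed. Hence `W_{n+3} = c W_{n+2} - (2d - 1) W_{n+1}`, with `W_0 = 1`, `W_1 = c` and
`W_2 = c² - 2d`, so multiplying `∑ W_n zⁿ` by `1 - c z + (2d - 1) z²` leaves only `1 - z²`.
Absolute convergence for `(2d - 1)|z| < 1` follows from `∑_x b_n(x) ≤ 2d (2d - 1)ⁿ`, and it
lets the sums over `x` and `n` be interchanged.
-/

theorem hasSum_mul_eq_of_linear_recurrence {R : Type*} [CommRing R] [TopologicalSpace R]
    [IsTopologicalRing R] [T2Space R] {a : ℕ → R} {z c q S : R}
    (hS : HasSum (fun n => a n * z ^ n) S)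
    (hrec : ∀ n, a (n + 3) = c * a (n + 2) - q * a (n + 1)) :
    (1 - c * z + q * z ^ 2) * S =
      a 0 + (a 1 - c * a 0) * z + (a 2 - c * a 1 + q * a 0) * z ^ 2 := by
  have shift : ∀ k, HasSum (fun n => a (n + k) * z ^ (n + k))
      (S - ∑ i ∈ Finset.range k, a i * z ^ i) := fun k => (hasSum_nat_add_iff' k).2 hS
  have hzero : HasSum (fun n => a (n + 3) * z ^ (n + 3) - c * z * (a (n + 2) * z ^ (n + 2))
      + q * z ^ 2 * (a (n + 1) * z ^ (n + 1))) 0 := by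
    convert hasSum_zero using 2 with n
    rw [hrec]
    ring
  have := (((shift 3).sub ((shift 2).mul_left (c * z))).add
    ((shift 1).mul_left (q * z ^ 2))).unique hzero
  simp only [Finset.sum_range_succ, Finset.sum_range_zero] at this
  linear_combination this

section Walks

variable {d : ℕ}

lemma one_le_two_mul_sub_one (hd : 1 ≤ d) : (1 : ℝ) ≤ 2 * d - 1 := by
  have : (1 : ℝ) ≤ d := by exact_mod_cast hd
  linarith

lemma isNB_snoc {n : ℕ} (s : Fin (n + 1) → Dir d) (ι : Dir d) :
    IsNB (Fin.snoc s ι : Fin (n + 2) → Dir d) ↔ IsNB s ∧ ι ≠ dirNeg (s (Fin.last n)) := by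
  constructor
  · intro h
    refine ⟨fun i hi => ?_, ?_⟩
    · simpa [Fin.snoc, hi, Nat.lt_of_succ_lt hi, Fin.castLT] using h i (by omega)
    · simpa [Fin.snoc, Fin.last] using h n (by omega)
  · rintro ⟨hs, hι⟩ i hi
    rcases Nat.lt_or_ge (i + 1) (n + 1) with hlt | hge
    · simpa [Fin.snoc, hlt, Nat.lt_of_succ_lt hlt, Fin.castLT] using hs i hlt
    · obtain rfl : i = n := by omega
      simpa [Fin.snoc, Fin.last] using hι

noncomputable def nbWalks (d n : ℕ) : Finset (Fin n → Dir d) :=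
  open scoped Classical in Finset.univ.filter IsNB

lemma mem_nbWalks {n : ℕ} {s : Fin n → Dir d} : s ∈ nbWalks d n ↔ IsNB s := by
  simp [nbWalks]

lemma nbWalks_of_le_one {n : ℕ} (hn : n ≤ 1) : nbWalks d n = Finset.univ := by
  ext s
  simpa [mem_nbWalks, IsNB] using fun i (hi : i + 1 < n) => absurd hi (by omega)

lemma sum_nbWalks_succ_succ {M : Type*} [AddCommMonoid M] {n : ℕ}
    (G : (Fin (n + 2) → Dir d) → M) :
    ∑ s ∈ nbWalks d (n + 2), G s =
      ∑ s ∈ nbWalks d (n + 1), ∑ ι ∈ Finset.univ.erase (dirNeg (s (Fin.last n))),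
        G (Fin.snoc s ι) := by
  rw [Finset.sum_sigma']
  refine Finset.sum_nbij' (fun s => ⟨Fin.init s, s (Fin.last (n + 1))⟩)
    (fun p => Fin.snoc p.1 p.2) ?_ ?_ ?_ ?_ ?_
  · intro s hs
    rw [mem_nbWalks, ← Fin.snoc_init_self s, isNB_snoc] at hs
    simpa [mem_nbWalks] using hs
  · rintro ⟨s, ι⟩ hp
    simpa [mem_nbWalks, isNB_snoc] using hp
  · intro s _
    simp
  · rintro ⟨s, ι⟩ _
    simp
  · intro s _
    rw [Fin.snoc_init_self]

lemma sum_nbWalks_init {M : Type*} [AddCommMonoid M] {n : ℕ}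
    (G : (Fin (n + 1) → Dir d) → M) :
    ∑ s ∈ nbWalks d (n + 2), G (Fin.init s) =
      (2 * d - 1) • ∑ s ∈ nbWalks d (n + 1), G s := by
  rw [sum_nbWalks_succ_succ, Finset.smul_sum]
  refine Finset.sum_congr rfl fun s _ => ?_
  simp [Finset.card_erase_of_mem, mul_comm]

lemma card_nbWalks_succ (n : ℕ) : (nbWalks d (n + 1)).card = 2 * d * (2 * d - 1) ^ n := by
  induction n with
  | zero => simp [nbWalks_of_le_one, mul_comm]
  | succ n ih =>
    have := sum_nbWalks_init (d := d) (n := n) (fun _ => 1)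
    simp only [Finset.sum_const, smul_eq_mul, mul_one] at this
    rw [this, ih, pow_succ]
    ring

lemma card_nbWalks_le (hd : 1 ≤ d) (n : ℕ) :
    ((nbWalks d n).card : ℝ) ≤ 2 * d * (2 * d - 1) ^ n := by
  have hq := one_le_two_mul_sub_one hd
  cases n with
  | zero => simp [nbWalks_of_le_one]; linarith
  | succ n =>
    rw [card_nbWalks_succ, Nat.cast_mul, Nat.cast_pow, Nat.cast_sub (by omega)]
    push_cast
    gcongr
    omega

lemma nbw_eq_card (n : ℕ) (x : Vertex d) :
    nbw d n x = ((nbWalks d n).filter fun s => ∑ i, dirVec (s i) = x).card := by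
  classical
  rw [nbw, Nat.card_eq_fintype_card, Fintype.card_subtype]
  congr 1
  ext s
  simp [mem_nbWalks]

lemma hasSum_nbw_smul {M : Type*} [AddCommMonoid M] [TopologicalSpace M] (n : ℕ)
    (g : Vertex d → M) :
    HasSum (fun x => nbw d n x • g x) (∑ s ∈ nbWalks d n, g (∑ i, dirVec (s i))) := by
  classical
  have hsupp : ∀ x ∉ (nbWalks d n).image (fun s => ∑ i, dirVec (s i)),
      nbw d n x • g x = 0 := by
    intro x hx
    rw [nbw_eq_card, Finset.card_eq_zero.2, zero_smul]
    exact Finset.filter_eq_empty_iff.2 fun s hs hsx => hx (Finset.mem_image.2 ⟨s, hs, hsx⟩)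
  rw [Finset.sum_comp]
  simpa only [nbw_eq_card] using hasSum_sum_of_ne_finset_zero hsupp

lemma summable_nbw_mul_pow (hd : 1 ≤ d) {r : ℝ} (hr0 : 0 ≤ r) (hr : (2 * d - 1) * r < 1) :
    Summable (fun q : Vertex d × ℕ => (nbw d q.2 q.1 : ℝ) * r ^ q.2) := by
  refine (?_ : Summable fun p : ℕ × Vertex d => (nbw d p.1 p.2 : ℝ) * r ^ p.1).prod_symm
  have hslice : ∀ n,
      HasSum (fun x => (nbw d n x : ℝ) * r ^ n) ((nbWalks d n).card * r ^ n) := by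
    intro n
    simpa [← nsmul_eq_mul] using hasSum_nbw_smul n (fun _ => r ^ n)
  rw [summable_prod_of_nonneg fun _ => mul_nonneg (Nat.cast_nonneg _) (pow_nonneg hr0 _)]
  refine ⟨fun n => (hslice n).summable, ?_⟩
  have hq : (0 : ℝ) ≤ 2 * d - 1 := zero_le_one.trans (one_le_two_mul_sub_one hd)
  have hgeom := (summable_geometric_of_lt_one (mul_nonneg hq hr0) hr).mul_left (2 * d : ℝ)
  refine hgeom.of_nonneg_of_le (fun _ => tsum_nonneg fun _ => by positivity) fun n => ?_
  rw [(hslice n).tsum_eq, mul_pow, ← mul_assoc]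
  gcongr
  exact card_nbWalks_le hd n

end Walks

section Fourier

variable {d : ℕ}

noncomputable def phase (k : Fin d → ℝ) (ι : Dir d) : ℂ :=
  Complex.exp (Complex.I * (dot k (dirVec ι) : ℂ))

lemma dot_neg (k : Fin d → ℝ) (x : Vertex d) : dot k (-x) = -dot k x := by
  simp [dot, Finset.sum_neg_distrib]

lemma dot_basis (k : Fin d → ℝ) (i : Fin d) : dot k (basis i) = k i := by
  simp [dot, basis]

lemma dot_sum {n : ℕ} (k : Fin d → ℝ) (x : Fin n → Vertex d) :
    dot k (∑ i, x i) = ∑ i, dot k (x i) := by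
  simp only [dot, Finset.sum_apply, Int.cast_sum, Finset.mul_sum]
  exact Finset.sum_comm

lemma phase_mul_phase_dirNeg (k : Fin d → ℝ) (ι : Dir d) :
    phase k ι * phase k (dirNeg ι) = 1 := by
  have : dirVec (dirNeg ι) = -dirVec ι := by
    obtain ⟨i, _ | _⟩ := ι <;> simp [dirVec, dirNeg]
  rw [phase, phase, this, dot_neg, ← Complex.exp_add]
  simp

lemma sum_phase (k : Fin d → ℝ) : ∑ ι, phase k ι = 2 * d * (Dhat d k : ℂ) := by
  have hpair : ∀ i, ∑ b : Bool, phase k (i, b) = 2 * Real.cos (k i) := by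
    intro i
    simp [phase, dirVec, dot_neg, dot_basis, Complex.cos, mul_comm]
    ring
  obtain rfl | hd := eq_or_ne d 0
  · simp
  · have : (d : ℂ) ≠ 0 := Nat.cast_ne_zero.2 hd
    rw [Fintype.sum_prod_type, Finset.sum_congr rfl fun i _ => hpair i, Dhat,
      ← Finset.mul_sum]
    push_cast
    field_simp

noncomputable def walkPhase {n : ℕ} (k : Fin d → ℝ) (s : Fin n → Dir d) : ℂ :=
  ∏ i, phase k (s i)

lemma walkPhase_snoc {n : ℕ} (k : Fin d → ℝ) (s : Fin n → Dir d) (ι : Dir d) :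
    walkPhase k (Fin.snoc s ι : Fin (n + 1) → Dir d) = walkPhase k s * phase k ι := by
  simp [walkPhase, Fin.prod_univ_castSucc]

lemma exp_dot_sum_dirVec {n : ℕ} (k : Fin d → ℝ) (s : Fin n → Dir d) :
    Complex.exp (Complex.I * (dot k (∑ i, dirVec (s i)) : ℂ)) = walkPhase k s := by
  rw [dot_sum, Complex.ofReal_sum, Finset.mul_sum, Complex.exp_sum]
  rfl

noncomputable def nbwFourier (d : ℕ) (k : Fin d → ℝ) (n : ℕ) : ℂ :=
  ∑ s ∈ nbWalks d n, walkPhase k s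

-- Of the `2d` extensions of `s`, the forbidden reversal of its last step
-- has the phase of `Fin.init s`.
lemma nbwFourier_succ_succ (k : Fin d → ℝ) (n : ℕ) :
    nbwFourier d k (n + 2) =
      (∑ ι, phase k ι) * nbwFourier d k (n + 1) -
        ∑ s ∈ nbWalks d (n + 1), walkPhase k (Fin.init s) := by
  rw [nbwFourier, sum_nbWalks_succ_succ, nbwFourier, Finset.mul_sum, ← Finset.sum_sub_distrib]
  refine Finset.sum_congr rfl fun s _ => ?_
  have hlast : walkPhase k s = walkPhase k (Fin.init s) * phase k (s (Fin.last n)) := by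
    rw [← walkPhase_snoc, Fin.snoc_init_self]
  simp only [walkPhase_snoc, ← Finset.mul_sum, Finset.sum_erase_eq_sub (Finset.mem_univ _)]
  linear_combination -walkPhase k (Fin.init s) * phase_mul_phase_dirNeg k (s (Fin.last n)) -
    phase k (dirNeg (s (Fin.last n))) * hlast

lemma nbwFourier_zero (k : Fin d → ℝ) : nbwFourier d k 0 = 1 := by
  simp [nbwFourier, nbWalks_of_le_one, walkPhase]

lemma nbwFourier_one (k : Fin d → ℝ) : nbwFourier d k 1 = ∑ ι, phase k ι := by
  rw [nbwFourier, nbWalks_of_le_one le_rfl,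
    ← (Equiv.funUnique (Fin 1) (Dir d)).symm.sum_comp]
  simp [walkPhase]

lemma nbwFourier_two (k : Fin d → ℝ) :
    nbwFourier d k 2 = (∑ ι, phase k ι) ^ 2 - 2 * d := by
  rw [nbwFourier_succ_succ, nbwFourier_one, nbWalks_of_le_one le_rfl]
  simp [walkPhase, sq, mul_comm]

lemma nbwFourier_succ_succ_succ (hd : 1 ≤ d) (k : Fin d → ℝ) (n : ℕ) :
    nbwFourier d k (n + 3) =
      (∑ ι, phase k ι) * nbwFourier d k (n + 2) -
        (2 * d - 1) * nbwFourier d k (n + 1) := by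
  rw [nbwFourier_succ_succ, sum_nbWalks_init, nsmul_eq_mul, Nat.cast_sub (by omega)]
  push_cast
  rfl

lemma hasSum_nbw_mul_exp (k : Fin d → ℝ) (z : ℂ) (n : ℕ) :
    HasSum (fun x => (nbw d n x : ℂ) * z ^ n * Complex.exp (Complex.I * (dot k x : ℂ)))
      (nbwFourier d k n * z ^ n) := by
  convert hasSum_nbw_smul n (fun x => z ^ n * Complex.exp (Complex.I * (dot k x : ℂ)))
    using 1
  · ext x
    rw [nsmul_eq_mul, mul_assoc]
  · simp only [exp_dot_sum_dirVec, nbwFourier, Finset.mul_sum, mul_comm]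

lemma nbwFourier_hasSum_mul_eq (hd : 1 ≤ d) (k : Fin d → ℝ) {z S : ℂ}
    (hS : HasSum (fun n => nbwFourier d k n * z ^ n) S) :
    (1 + (2 * d - 1) * z ^ 2 - 2 * d * z * (Dhat d k : ℂ)) * S = 1 - z ^ 2 := by
  have := hasSum_mul_eq_of_linear_recurrence hS (nbwFourier_succ_succ_succ hd k)
  rw [nbwFourier_zero, nbwFourier_one, nbwFourier_two, sum_phase] at this
  linear_combination this

end Fourier

/-- **Closed form of the non-backtracking walk generating function** (equation (2.16)). -/
theorem nbw_generating_function (d : ℕ) (hd : 1 ≤ d) (z : ℂ)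
    (hz : ‖z‖ < 1 / (2 * (d : ℝ) - 1)) (k : Fin d → ℝ) :
    Summable (fun q : Vertex d × ℕ =>
        ‖(nbw d q.2 q.1 : ℂ) * z ^ q.2 * Complex.exp (Complex.I * (dot k q.1 : ℂ))‖) ∧
      ((1 : ℂ) + (2 * (d : ℂ) - 1) * z ^ 2 - 2 * (d : ℂ) * z * (Dhat d k : ℂ)) ≠ 0 ∧
      (∑' x : Vertex d, ∑' n : ℕ,
          (nbw d n x : ℂ) * z ^ n * Complex.exp (Complex.I * (dot k x : ℂ))) =
        (1 - z ^ 2) /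
          ((1 : ℂ) + (2 * (d : ℂ) - 1) * z ^ 2 - 2 * (d : ℂ) * z * (Dhat d k : ℂ)) := by
  have hq := one_le_two_mul_sub_one hd
  have hzq : (2 * d - 1) * ‖z‖ < 1 := by
    rwa [lt_div_iff₀ (by linarith), mul_comm] at hz
  have hz1 : ‖z‖ < 1 := (le_mul_of_one_le_left (norm_nonneg z) hq).trans_lt hzq
  have hnorm : Summable (fun q : Vertex d × ℕ =>
      ‖(nbw d q.2 q.1 : ℂ) * z ^ q.2 * Complex.exp (Complex.I * (dot k q.1 : ℂ))‖) := by
    convert summable_nbw_mul_pow hd (norm_nonneg z) hzq using 2 with q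
    rw [norm_mul, norm_mul, mul_comm Complex.I, Complex.norm_exp_ofReal_mul_I]
    simp
  have hsum := hnorm.of_norm
  have hS := ((Equiv.prodComm ℕ (Vertex d)).hasSum_iff.2 hsum.hasSum).prod_fiberwise
    (hasSum_nbw_mul_exp k z)
  have hgen := nbwFourier_hasSum_mul_eq hd k hS
  have hden :
      (1 : ℂ) + (2 * (d : ℂ) - 1) * z ^ 2 - 2 * (d : ℂ) * z * (Dhat d k : ℂ) ≠ 0 := by
    intro h
    have h1 : (1 : ℂ) = z ^ 2 := by rw [← sub_eq_zero, ← hgen, h, zero_mul]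
    have : ‖z‖ ^ 2 < 1 := pow_lt_one₀ (norm_nonneg z) hz1 two_ne_zero
    rw [← norm_pow, ← h1, norm_one] at this
    exact this.false
  refine ⟨hnorm, hden, ?_⟩
  rw [← hsum.tsum_prod, eq_div_iff hden, mul_comm, hgen]

end NoBLE
end

section
/- Domination of the percolation two-point function by the non-backtracking walk generating function: for every d ≥ 1, every p ∈ [0, 1/(2d−1)] and every x ∈ ℤ^d, τ_p(x) ≤ Σ_{n≥0} b_n(x)·p^n, the right-hand side taken in [0, ∞]. -/
/-!
If `0 ↔ x`, erasing the loops of an occupied path gives a self-avoiding walk from `0` to `x`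
all of whose bonds are occupied. The bonds of an `n`-step self-avoiding walk are distinct, so
this event has probability `pⁿ` (at most `1 ≤ pⁿ` when `p > 1`), and the union bound gives
`τ_p(x) ≤ ∑ₙ sₙ(x) pⁿ` with `sₙ(x)` the number of self-avoiding walks. Self-avoiding walks are
non-backtracking, hence `sₙ(x) ≤ bₙ(x)`.

The probability `pⁿ` comes from the independence of the bits of a uniform variable on `[0, 1)`:
splitting `[0, 1)` at `p` and rescaling both pieces back to `[0, 1)` turns the first bit into
the choice of piece and shifts the remaining bits down by one.
-/

open MeasureTheory Filter
open scoped ENNReal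

namespace NoBLE

section Walks

variable {d : ℕ}

lemma dirVec_dirNeg (ι : Dir d) : dirVec (dirNeg ι) = -dirVec ι := by
  obtain ⟨i, _ | _⟩ := ι <;> simp [dirNeg, dirVec]

def bondOf (v : Vertex d) (ι : Dir d) : Bond d :=
  if ι.2 then (v, ι.1) else (v + dirVec ι, ι.1)

lemma sym2_bondOf (v : Vertex d) (ι : Dir d) :
    s((bondOf v ι).1, (bondOf v ι).1 + basis (bondOf v ι).2) = s(v, v + dirVec ι) := by
  obtain ⟨i, _ | _⟩ := ι
  · rw [Sym2.eq_swap]; simp [bondOf, dirVec]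
  · simp [bondOf, dirVec]

lemma eq_or_eq_of_bondOf_eq {a b : Vertex d} {ι κ : Dir d} (h : bondOf a ι = bondOf b κ) :
    a = b ∨ a = b + dirVec κ := by
  have ha : a ∈ s(a, a + dirVec ι) := Sym2.mem_mk_left _ _
  rwa [← sym2_bondOf, h, sym2_bondOf, Sym2.mem_iff] at ha

lemma Occ.exists_dir {ω : Config d} {a b : Vertex d} (h : Occ ω a b) :
    ∃ ι : Dir d, b = a + dirVec ι ∧ ω (bondOf a ι) = true := by
  rcases h with ⟨i, rfl, hocc⟩ | ⟨i, rfl, hocc⟩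
  · exact ⟨(i, true), by simp [dirVec], by simpa [bondOf] using hocc⟩
  · exact ⟨(i, false), by simp [dirVec], by simpa [bondOf, dirVec] using hocc⟩

def OccWalk (ω : Config d) : Vertex d → List (Dir d) → Vertex d → Prop
  | v, [], w => v = w
  | v, ι :: l, w => ω (bondOf v ι) = true ∧ OccWalk ω (v + dirVec ι) l w

def positions (v : Vertex d) : List (Dir d) → List (Vertex d)
  | [] => [v]
  | ι :: l => v :: positions (v + dirVec ι) l

def bonds (v : Vertex d) : List (Dir d) → List (Bond d)
  | [] => []
  | ι :: l => bondOf v ι :: bonds (v + dirVec ι) l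

lemma start_mem_positions (v : Vertex d) (l : List (Dir d)) : v ∈ positions v l := by
  cases l <;> simp [positions]

lemma length_bonds (v : Vertex d) (l : List (Dir d)) : (bonds v l).length = l.length := by
  induction l generalizing v with
  | nil => rfl
  | cons ι l ih => simp [bonds, ih]

lemma mem_bonds {b : Bond d} {u : Vertex d} {l : List (Dir d)} (hb : b ∈ bonds u l) :
    ∃ a κ, b = bondOf a κ ∧ a ∈ positions u l ∧ a + dirVec κ ∈ positions u l := by
  induction l generalizing u with
  | nil => simp [bonds] at hb
  | cons ι l ih =>
    rcases List.mem_cons.mp hb with rfl | hb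
    · exact ⟨u, ι, rfl, start_mem_positions _ _, List.mem_cons_of_mem _ (start_mem_positions _ _)⟩
    · obtain ⟨a, κ, rfl, ha, haκ⟩ := ih hb
      exact ⟨a, κ, rfl, List.mem_cons_of_mem _ ha, List.mem_cons_of_mem _ haκ⟩

lemma nodup_bonds {v : Vertex d} {l : List (Dir d)} (h : (positions v l).Nodup) :
    (bonds v l).Nodup := by
  induction l generalizing v with
  | nil => simp [bonds]
  | cons ι l ih =>
    rw [positions, List.nodup_cons] at h
    refine List.nodup_cons.mpr ⟨fun hmem => ?_, ih h.2⟩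
    obtain ⟨a, κ, hbond, ha, haκ⟩ := mem_bonds hmem
    rcases eq_or_eq_of_bondOf_eq hbond with rfl | rfl
    · exact h.1 ha
    · exact h.1 haκ

lemma isChain_of_nodup_positions {v : Vertex d} {l : List (Dir d)} (h : (positions v l).Nodup) :
    l.IsChain (fun ι κ => κ ≠ dirNeg ι) := by
  induction l generalizing v with
  | nil => exact List.isChain_nil
  | cons ι l ih =>
    rw [positions, List.nodup_cons] at h
    cases l with
    | nil => exact List.isChain_singleton _
    | cons κ l =>
      refine List.isChain_cons_cons.mpr ⟨fun hκ => h.1 ?_, ih h.2⟩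
      have hback : v + dirVec ι + dirVec κ = v := by
        rw [hκ, dirVec_dirNeg, add_neg_cancel_right]
      simpa only [positions, hback] using
        List.mem_cons_of_mem _ (start_mem_positions (v + dirVec ι + dirVec κ) l)

namespace OccWalk

variable {ω : Config d}

lemma add_sum_eq {v w : Vertex d} {l : List (Dir d)} (h : OccWalk ω v l w) :
    v + (l.map dirVec).sum = w := by
  induction l generalizing v with
  | nil => simpa [OccWalk] using h
  | cons ι l ih => rw [← ih h.2]; simp [add_assoc]

lemma occupied {v w : Vertex d} {l : List (Dir d)} (h : OccWalk ω v l w) :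
    ∀ b ∈ bonds v l, ω b = true := by
  induction l generalizing v with
  | nil => simp [bonds]
  | cons ι l ih =>
    intro b hb
    rcases List.mem_cons.mp hb with rfl | hb
    · exact h.1
    · exact ih h.2 b hb

lemma suffix_of_mem_positions {u v w : Vertex d} {l : List (Dir d)} (h : OccWalk ω u l w)
    (hv : v ∈ positions u l) :
    ∃ l', OccWalk ω v l' w ∧ (positions v l').Sublist (positions u l) := by
  induction l generalizing u with
  | nil =>
    obtain rfl : v = u := by simpa [positions] using hv
    exact ⟨[], h, List.Sublist.refl _⟩
  | cons ι l ih =>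
    rcases List.mem_cons.mp hv with rfl | hv
    · exact ⟨ι :: l, h, List.Sublist.refl _⟩
    · obtain ⟨l', hw, hsub⟩ := ih h.2 hv
      exact ⟨l', hw, hsub.trans (List.sublist_cons_self _ _)⟩

lemma exists_nodup_of_conn {v w : Vertex d} (h : Conn ω v w) :
    ∃ l, OccWalk ω v l w ∧ (positions v l).Nodup := by
  induction h using Relation.ReflTransGen.head_induction_on with
  | refl => exact ⟨[], rfl, by simp [positions]⟩
  | @head a _ hocc _ ih =>
    obtain ⟨l, hw, hnd⟩ := ih
    obtain ⟨ι, rfl, hbond⟩ := hocc.exists_dir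
    -- loop erasure: if `a` is visited again, keep only the part after that visit
    by_cases hmem : a ∈ positions (a + dirVec ι) l
    · obtain ⟨l', hw', hsub⟩ := hw.suffix_of_mem_positions hmem
      exact ⟨l', hw', hnd.sublist hsub⟩
    · exact ⟨ι :: l, ⟨hbond, hw⟩, List.nodup_cons.mpr ⟨hmem, hnd⟩⟩

end OccWalk

def SAW (d n : ℕ) (x : Vertex d) : Type :=
  {s : Fin n → Dir d // (positions 0 (List.ofFn s)).Nodup ∧ ∑ i, dirVec (s i) = x}

instance (n : ℕ) (x : Vertex d) : Finite (SAW d n x) := Subtype.finite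

lemma isNB_of_nodup_positions {n : ℕ} {s : Fin n → Dir d} (h : (positions 0 (List.ofFn s)).Nodup) :
    IsNB s := by
  intro i hi
  have := List.isChain_iff_getElem.mp (isChain_of_nodup_positions h) i (by simpa using hi)
  rwa [List.getElem_ofFn, List.getElem_ofFn] at this

lemma card_saw_le_nbw (n : ℕ) (x : Vertex d) : Nat.card (SAW d n x) ≤ nbw d n x :=
  Nat.card_le_card_of_injective (fun s => ⟨s.1, isNB_of_nodup_positions s.2.1, s.2.2⟩)
    fun _ _ h => Subtype.ext (congrArg Subtype.val h :)

def SAW.occupied {n : ℕ} {x : Vertex d} (s : SAW d n x) : Set (Config d) :=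
  {ω | ∀ b ∈ bonds 0 (List.ofFn s.1), ω b = true}

lemma conn_subset_iUnion_saw (x : Vertex d) :
    {ω : Config d | Conn ω 0 x} ⊆ ⋃ s : Σ n, SAW d n x, s.2.occupied := by
  intro ω hω
  obtain ⟨l, hw, hnd⟩ := OccWalk.exists_nodup_of_conn hω
  have hsum : ∑ i, dirVec (l.get i) = x := by
    rw [← hw.add_sum_eq, zero_add, ← List.sum_ofFn]
    change (List.ofFn (dirVec ∘ l.get)).sum = _
    rw [← List.map_ofFn, List.ofFn_get]
  refine Set.mem_iUnion.mpr ⟨⟨l.length, l.get, by rwa [List.ofFn_get], hsum⟩, ?_⟩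
  change ∀ b ∈ bonds 0 (List.ofFn l.get), ω b = true
  rw [List.ofFn_get]
  exact hw.occupied

end Walks

section Bits

lemma measurable_bit (p : ℝ) : ∀ n, Measurable (bit p n)
  | 0 => Measurable.ite measurableSet_Iio measurable_const measurable_const
  | n + 1 => (measurable_bit p n).comp
      (Measurable.ite measurableSet_Iio (measurable_id.div_const p)
        ((measurable_id.sub_const p).div_const (1 - p)))

def bitEvent (p : ℝ) (S : Finset ℕ) : Set ℝ := {u | ∀ k ∈ S, bit p k u = true}

/-- `bit p (k + 1) u` is bit `k` of the rescaled variable (see `bit`), so an event on the bits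
`S` of `u` is an event on the bits `shiftDown S` of the rescaled variable. -/
noncomputable def shiftDown (S : Finset ℕ) : Finset ℕ :=
  S.preimage Nat.succ Nat.succ_injective.injOn

lemma card_shiftDown_add (S : Finset ℕ) :
    (shiftDown S).card + (if 0 ∈ S then 1 else 0) = S.card := by
  classical
  have herase : {k ∈ S | k ∈ Set.range Nat.succ} = S.erase 0 := by
    ext k; cases k <;> simp
  rw [shiftDown, Finset.card_preimage, herase]
  split_ifs with h0
  · exact Finset.card_erase_add_one h0
  · rw [Finset.erase_eq_of_notMem h0, add_zero]

lemma mem_bitEvent_of_lt {p u : ℝ} (S : Finset ℕ) (h : u < p) :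
    u ∈ bitEvent p S ↔ u / p ∈ bitEvent p (shiftDown S) := by
  simp only [bitEvent, shiftDown, Set.mem_ofPred_eq, Finset.mem_preimage]
  constructor
  · intro hS j hj
    simpa [bit, h] using hS _ hj
  · rintro hS (_ | j) hk
    · simp [bit, h]
    · simpa [bit, h] using hS j hk

lemma mem_bitEvent_of_le {p u : ℝ} (S : Finset ℕ) (h : p ≤ u) :
    u ∈ bitEvent p S ↔ 0 ∉ S ∧ (u - p) / (1 - p) ∈ bitEvent p (shiftDown S) := by
  have h' : ¬u < p := not_lt.mpr h
  simp only [bitEvent, shiftDown, Set.mem_ofPred_eq, Finset.mem_preimage]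
  constructor
  · intro hS
    refine ⟨fun h0 => by simpa [bit, h'] using hS 0 h0, fun j hj => ?_⟩
    simpa [bit, h'] using hS _ hj
  · rintro ⟨h0, hS⟩ (_ | j) hk
    · exact absurd hk h0
    · simpa [bit, h'] using hS j hk

lemma volume_Ico_inter_preimage_affine (a : ℝ) {c : ℝ} (hc : 0 ≤ c) (B : Set ℝ) :
    volume (Set.Ico a (a + c) ∩ (fun u => (u - a) / c) ⁻¹' B)
      = ENNReal.ofReal c * volume (Set.Ico 0 1 ∩ B) := by
  rcases hc.eq_or_lt with rfl | hc
  · simp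
  have hIco : Set.Ico a (a + c) = (fun u => (u - a) / c) ⁻¹' Set.Ico 0 1 := by
    ext u
    simp only [Set.mem_Ico, Set.mem_preimage, div_nonneg_iff, div_lt_one hc]
    constructor
    · rintro ⟨h1, h2⟩; exact ⟨Or.inl ⟨by linarith, hc.le⟩, by linarith⟩
    · rintro ⟨h1 | h1, h2⟩ <;> constructor <;> linarith [h1.1, h1.2]
  have haffine : (fun u => (u - a) / c) = (fun v => c⁻¹ * v) ∘ (fun u => u + -a) := by
    ext u; simp [div_eq_inv_mul, sub_eq_add_neg]
  rw [hIco, ← Set.preimage_inter, haffine, Set.preimage_comp, measure_preimage_add_right,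
    Real.volume_preimage_mul_left (inv_ne_zero hc.ne'), inv_inv, abs_of_pos hc]

lemma Ico_inter_bitEvent_inter_Iio {p : ℝ} (hp1 : p ≤ 1) (S : Finset ℕ) :
    Set.Ico 0 1 ∩ bitEvent p S ∩ Set.Iio p
      = Set.Ico 0 p ∩ (fun u => u / p) ⁻¹' bitEvent p (shiftDown S) := by
  ext u
  simp only [Set.mem_inter_iff, Set.mem_Ico, Set.mem_Iio, Set.mem_preimage]
  constructor
  · rintro ⟨⟨⟨hu0, -⟩, hu⟩, hup⟩
    exact ⟨⟨hu0, hup⟩, (mem_bitEvent_of_lt S hup).mp hu⟩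
  · rintro ⟨⟨hu0, hup⟩, hu⟩
    exact ⟨⟨⟨hu0, hup.trans_le hp1⟩, (mem_bitEvent_of_lt S hup).mpr hu⟩, hup⟩

lemma Ico_inter_bitEvent_diff_Iio {p : ℝ} (hp0 : 0 ≤ p) (S : Finset ℕ) :
    (Set.Ico 0 1 ∩ bitEvent p S) \ Set.Iio p
      = if 0 ∈ S then ∅
        else Set.Ico p 1 ∩ (fun u => (u - p) / (1 - p)) ⁻¹' bitEvent p (shiftDown S) := by
  ext u
  simp only [Set.mem_sdiff, Set.mem_inter_iff, Set.mem_Ico, Set.mem_Iio, not_lt]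
  constructor
  · rintro ⟨⟨⟨-, hu1⟩, hu⟩, hpu⟩
    obtain ⟨h0, hu'⟩ := (mem_bitEvent_of_le S hpu).mp hu
    simpa [h0] using ⟨⟨hpu, hu1⟩, hu'⟩
  · split_ifs with h0
    · simp
    · rintro ⟨⟨hpu, hu1⟩, hu⟩
      exact ⟨⟨⟨hp0.trans hpu, hu1⟩, (mem_bitEvent_of_le S hpu).mpr ⟨h0, hu⟩⟩, hpu⟩

/-- The bits `bit p k` are independent Bernoulli(`p`) variables under the uniform law on `[0,1)`. -/
theorem volume_Ico_inter_bitEvent {p : ℝ} (hp0 : 0 ≤ p) (hp1 : p ≤ 1) (S : Finset ℕ) :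
    volume (Set.Ico 0 1 ∩ bitEvent p S) = ENNReal.ofReal p ^ S.card := by
  obtain ⟨N, hN⟩ : ∃ N, ∀ k ∈ S, k < N :=
    ⟨S.sup id + 1, fun k hk => Nat.lt_succ_of_le (Finset.le_sup (f := id) hk)⟩
  induction N generalizing S with
  | zero =>
    obtain rfl : S = ∅ :=
      Finset.eq_empty_of_forall_notMem fun k hk => absurd (hN k hk) k.not_lt_zero
    simp [bitEvent, Real.volume_Ico]
  | succ N ih =>
    have hshift := ih (shiftDown S) fun k hk =>
      Nat.succ_lt_succ_iff.mp (hN _ (by simpa [shiftDown] using hk))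
    have hlow := volume_Ico_inter_preimage_affine 0 hp0 (bitEvent p (shiftDown S))
    have hhigh := volume_Ico_inter_preimage_affine p (sub_nonneg.mpr hp1) (bitEvent p (shiftDown S))
    simp only [zero_add, sub_zero] at hlow
    rw [add_sub_cancel] at hhigh
    rw [← measure_inter_add_sdiff _ measurableSet_Iio, Ico_inter_bitEvent_inter_Iio hp1,
      Ico_inter_bitEvent_diff_Iio hp0, hlow, hshift, ← card_shiftDown_add S]
    split_ifs with h0
    · simp [pow_succ, mul_comm]
    · rw [hhigh, hshift, ← add_mul, ← ENNReal.ofReal_add hp0 (sub_nonneg.mpr hp1),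
        add_sub_cancel, ENNReal.ofReal_one, one_mul, add_zero]

end Bits

section Percolation

variable {d : ℕ}

lemma measurable_bits (p : ℝ) :
    Measurable fun u : ℝ => fun b : Bond d => bit p (Encodable.encode b) u :=
  measurable_pi_lambda _ fun _ => measurable_bit p _

lemma measurableSet_cylinder (bl : List (Bond d)) :
    MeasurableSet {ω : Config d | ∀ b ∈ bl, ω b = true} := by
  simp only [Set.ofPred_forall]
  exact MeasurableSet.biInter bl.finite_toSet.countable fun b _ =>
    measurableSet_eq_fun (measurable_pi_apply b) measurable_const

theorem percMeasure_cylinder {p : ℝ} (hp0 : 0 ≤ p) (hp1 : p ≤ 1) {bl : List (Bond d)}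
    (hbl : bl.Nodup) :
    percMeasure d p {ω | ∀ b ∈ bl, ω b = true} = ENNReal.ofReal p ^ bl.length := by
  classical
  have hpre : (fun u : ℝ => fun b : Bond d => bit p (Encodable.encode b) u) ⁻¹'
      {ω | ∀ b ∈ bl, ω b = true} = bitEvent p (bl.toFinset.image Encodable.encode) := by
    ext u
    simp only [Set.mem_preimage, Set.mem_ofPred_eq, bitEvent, Finset.mem_image, List.mem_toFinset]
    exact ⟨fun h _ ⟨b, hb, hk⟩ => hk ▸ h b hb, fun h b hb => h _ ⟨b, hb, rfl⟩⟩
  rw [percMeasure, Measure.map_apply (measurable_bits p) (measurableSet_cylinder bl), hpre,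
    Measure.restrict_apply' measurableSet_Ico, Set.inter_comm, volume_Ico_inter_bitEvent hp0 hp1,
    Finset.card_image_of_injective _ Encodable.encode_injective, List.toFinset_card_of_nodup hbl]

lemma percMeasure_le_one (p : ℝ) (E : Set (Config d)) : percMeasure d p E ≤ 1 :=
  calc percMeasure d p E ≤ percMeasure d p Set.univ := measure_mono (Set.subset_univ E)
    _ = 1 := by
      rw [percMeasure, Measure.map_apply (measurable_bits p) MeasurableSet.univ]
      simp [Real.volume_Ico]

lemma percMeasure_cylinder_le {p : ℝ} (hp0 : 0 ≤ p) {bl : List (Bond d)} (hbl : bl.Nodup) :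
    percMeasure d p {ω | ∀ b ∈ bl, ω b = true} ≤ ENNReal.ofReal p ^ bl.length := by
  rcases le_total p 1 with hp1 | hp1
  · exact (percMeasure_cylinder hp0 hp1 hbl).le
  · exact (percMeasure_le_one p _).trans (one_le_pow₀ (ENNReal.one_le_ofReal.mpr hp1))

lemma SAW.percMeasure_occupied_le {p : ℝ} (hp0 : 0 ≤ p) {n : ℕ} {x : Vertex d}
    (s : SAW d n x) :
    percMeasure d p s.occupied ≤ ENNReal.ofReal p ^ n := by
  have := percMeasure_cylinder_le hp0 (nodup_bonds s.2.1)
  rwa [length_bonds, List.length_ofFn] at this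

end Percolation

theorem tau_le_nbw_general (d : ℕ) (p : ℝ) (hp0 : 0 ≤ p) (x : Vertex d) :
    tauE d p x ≤ ∑' n : ℕ, (nbw d n x : ℝ≥0∞) * (ENNReal.ofReal p) ^ n :=
  calc tauE d p x
      ≤ percMeasure d p (⋃ s : Σ n, SAW d n x, s.2.occupied) :=
        measure_mono (conn_subset_iUnion_saw x)
    _ ≤ ∑' s : Σ n, SAW d n x, percMeasure d p s.2.occupied := measure_iUnion_le _
    _ = ∑' n, ∑' s : SAW d n x, percMeasure d p s.occupied := ENNReal.tsum_sigma' _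
    _ ≤ ∑' n, ∑' _ : SAW d n x, ENNReal.ofReal p ^ n :=
        ENNReal.tsum_le_tsum fun _ => ENNReal.tsum_le_tsum fun s => s.percMeasure_occupied_le hp0
    _ = ∑' n, (Nat.card (SAW d n x) : ℝ≥0∞) * ENNReal.ofReal p ^ n := by
        simp only [ENNReal.tsum_const, ENat.card_eq_coe_natCard, ENat.toENNReal_coe]
    _ ≤ ∑' n, (nbw d n x : ℝ≥0∞) * ENNReal.ofReal p ^ n :=
        ENNReal.tsum_le_tsum fun n => by gcongr; exact card_saw_le_nbw n x

/-- **Domination of the percolation two-point function by the non-backtracking walk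
generating function.** -/
theorem tau_le_nbw (d : ℕ) (hd : 1 ≤ d) (p : ℝ) (hp0 : 0 ≤ p)
    (hp1 : p ≤ 1 / (2 * (d : ℝ) - 1)) (x : Vertex d) :
    tauE d p x ≤ ∑' n : ℕ, (nbw d n x : ℝ≥0∞) * (ENNReal.ofReal p) ^ n :=
  tau_le_nbw_general d p hp0 x

end NoBLE
end
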